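/- For every function f in H^1(ℝ), the sharp Gagliardo–Nirenberg inequality ‖f‖_{L^6}^6 ≤ (4/π²) ‖f‖_{L^2}^4 ‖f'‖_{L^2}^2 holds. -/

import Mathlib

/-!
Put `v = ‖f‖²`, so that `|v'| ≤ 2 √v ‖f'‖`, and let `M = v z` be the maximum of `v`. The weight
`g s = √(M² - s²)` has a primitive `G` with `G M = π M² / 4`; since `G ∘ v` vanishes at `±∞` and
equals `G M` at `z`, the total variation bound gives `π M² / 2 ≤ ∫ g(v) |v'|`. Pointwise,
`λ g(v) |v'| ≤ λ² ‖f'‖² + v (M² - v²)` for every `λ ≥ 0`; integrating with `λ = 2 ‖f‖₂² / π` makes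
the terms in `M²` cancel and leaves `∫ v³ ≤ (4 / π²) (∫ v)² ∫ ‖f'‖²`.
-/

open MeasureTheory Filter Set Topology Real

theorem two_mul_norm_le_integral_norm_of_hasDerivAt {E : Type*} [NormedAddCommGroup E]
    [NormedSpace ℝ E] [CompleteSpace E] {φ φ' : ℝ → E}
    (hφ : ∀ x, HasDerivAt φ (φ' x) x) (hφ' : Integrable φ')
    (hbot : Tendsto φ atBot (𝓝 0)) (htop : Tendsto φ atTop (𝓝 0)) (z : ℝ) :
    2 * ‖φ z‖ ≤ ∫ x, ‖φ' x‖ := by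
  have hleft : ∫ x in Iic z, φ' x = φ z := by
    rw [integral_Iic_of_hasDerivAt_of_tendsto' (fun x _ => hφ x) hφ'.integrableOn hbot, sub_zero]
  have hright : ∫ x in Ioi z, φ' x = -φ z := by
    rw [integral_Ioi_of_hasDerivAt_of_tendsto' (fun x _ => hφ x) hφ'.integrableOn htop, zero_sub]
  calc 2 * ‖φ z‖ = ‖∫ x in Iic z, φ' x‖ + ‖∫ x in Ioi z, φ' x‖ := by
        rw [hleft, hright, norm_neg, two_mul]
    _ ≤ (∫ x in Iic z, ‖φ' x‖) + ∫ x in Ioi z, ‖φ' x‖ :=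
        add_le_add (norm_integral_le_integral_norm _) (norm_integral_le_integral_norm _)
    _ = ∫ x, ‖φ' x‖ :=
        intervalIntegral.integral_Iic_add_Ioi hφ'.norm.integrableOn hφ'.norm.integrableOn

theorem integral_sqrt_one_sub_sq_zero_one : ∫ t in (0 : ℝ)..1, √(1 - t ^ 2) = π / 4 := by
  have hint : ∀ a b : ℝ, IntervalIntegrable (fun t => √(1 - t ^ 2)) volume a b :=
    fun a b => (by fun_prop : Continuous fun t : ℝ => √(1 - t ^ 2)).intervalIntegrable a b
  have hsymm : ∫ t in (-1 : ℝ)..0, √(1 - t ^ 2) = ∫ t in (0 : ℝ)..1, √(1 - t ^ 2) := by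
    have h := intervalIntegral.integral_comp_neg (a := (0 : ℝ)) (b := 1) (fun t => √(1 - t ^ 2))
    simp only [even_two, Even.neg_pow, neg_zero] at h
    exact h.symm
  linarith [intervalIntegral.integral_add_adjacent_intervals (hint (-1) 0) (hint 0 1),
    integral_sqrt_one_sub_sq]

theorem integral_sqrt_sq_sub_sq {r : ℝ} (hr : 0 ≤ r) :
    ∫ t in (0 : ℝ)..r, √(r ^ 2 - t ^ 2) = π * r ^ 2 / 4 := by
  rcases hr.eq_or_lt with rfl | hr
  · simp
  have hscale := intervalIntegral.integral_comp_mul_left (a := 0) (b := 1)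
    (fun t => √(r ^ 2 - t ^ 2)) hr.ne'
  have hpoint : ∀ s : ℝ, √(r ^ 2 - (r * s) ^ 2) = r * √(1 - s ^ 2) := fun s => by
    rw [show r ^ 2 - (r * s) ^ 2 = r ^ 2 * (1 - s ^ 2) by ring, sqrt_mul (sq_nonneg r),
      sqrt_sq hr.le]
  simp only [hpoint, intervalIntegral.integral_const_mul, integral_sqrt_one_sub_sq_zero_one,
    mul_zero, mul_one, smul_eq_mul] at hscale
  field_simp at hscale ⊢
  linarith

theorem Continuous.exists_forall_ge_of_tendsto_cocompact_zero {β : Type*} [TopologicalSpace β]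
    {v : β → ℝ} (hv : Continuous v) (hlim : Tendsto v (cocompact β) (𝓝 0)) {x₀ : β}
    (h₀ : 0 ≤ v x₀) : ∃ z, ∀ x, v x ≤ v z := by
  by_cases hpos : ∃ x₁, 0 < v x₁
  · obtain ⟨x₁, hx₁⟩ := hpos
    exact hv.exists_forall_ge' x₁ ((hlim.eventually (gt_mem_nhds hx₁)).mono fun _ => le_of_lt)
  · exact ⟨x₀, fun x => (not_lt.mp fun h => hpos ⟨x, h⟩).trans h₀⟩

theorem pi_mul_sq_div_two_le_integral_sqrt_sq_sub_sq_mul_abs {v w : ℝ → ℝ}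
    (hv : ∀ x, HasDerivAt v (w x) x) (hw : Integrable w)
    (hbot : Tendsto v atBot (𝓝 0)) (htop : Tendsto v atTop (𝓝 0)) {z : ℝ} (hz : 0 ≤ v z) :
    π * v z ^ 2 / 2 ≤ ∫ x, √(v z ^ 2 - v x ^ 2) * |w x| := by
  set M := v z
  set g : ℝ → ℝ := fun s => √(M ^ 2 - s ^ 2)
  have hg : Continuous g := by fun_prop
  set G : ℝ → ℝ := fun s => ∫ t in (0 : ℝ)..s, g t
  have hG : ∀ s, HasDerivAt G (g s) s := fun s => (hg.integral_hasStrictDerivAt 0 s).hasDerivAt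
  have hGv : ∀ x, HasDerivAt (G ∘ v) (g (v x) * w x) x := fun x => (hG (v x)).comp x (hv x)
  have hint : Integrable fun x => g (v x) * w x := by
    refine (hw.norm.const_mul M).mono' ((hg.comp_aestronglyMeasurable
      (continuous_iff_continuousAt.2 fun x => (hv x).continuousAt).aestronglyMeasurable).mul
      hw.aestronglyMeasurable) (ae_of_all _ fun x => ?_)
    rw [norm_mul, norm_of_nonneg (sqrt_nonneg _)]
    gcongr
    calc g (v x) ≤ √(M ^ 2) := sqrt_le_sqrt (by nlinarith)
      _ = M := sqrt_sq hz
  have hGc : Continuous G := continuous_iff_continuousAt.2 fun s => (hG s).continuousAt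
  have hlim : ∀ l, Tendsto v l (𝓝 0) → Tendsto (G ∘ v) l (𝓝 0) := fun l h => by
    simpa [G] using (hGc.tendsto 0).comp h
  have hGM : G M = π * M ^ 2 / 4 := integral_sqrt_sq_sub_sq hz
  calc π * M ^ 2 / 2 = 2 * ‖G M‖ := by rw [hGM, norm_of_nonneg (by positivity)]; ring
    _ ≤ ∫ x, ‖g (v x) * w x‖ :=
        two_mul_norm_le_integral_norm_of_hasDerivAt hGv hint (hlim _ hbot) (hlim _ htop) z
    _ = ∫ x, g (v x) * |w x| := by
        simp only [norm_mul, norm_of_nonneg (sqrt_nonneg _), norm_eq_abs, g]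

theorem mul_sqrt_sq_sub_sq_mul_abs_le {v w u M l : ℝ} (hv : 0 ≤ v) (hvM : v ≤ M)
    (hw : |w| ≤ 2 * √v * u) (hl : 0 ≤ l) :
    l * (√(M ^ 2 - v ^ 2) * |w|) ≤ l ^ 2 * u ^ 2 + (M ^ 2 * v - v ^ 3) := by
  have hs : √(M ^ 2 - v ^ 2) ^ 2 = M ^ 2 - v ^ 2 := sq_sqrt (by nlinarith)
  have hsv : √v ^ 2 = v := sq_sqrt hv
  have hls : 0 ≤ l * √(M ^ 2 - v ^ 2) := mul_nonneg hl (sqrt_nonneg _)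
  calc l * (√(M ^ 2 - v ^ 2) * |w|) ≤ l * √(M ^ 2 - v ^ 2) * (2 * √v * u) := by
        rw [← mul_assoc]; exact mul_le_mul_of_nonneg_left hw hls
    _ ≤ l ^ 2 * u ^ 2 + (M ^ 2 * v - v ^ 3) := by
        nlinarith [sq_nonneg (l * u - √v * √(M ^ 2 - v ^ 2))]

theorem integral_cube_le_of_abs_deriv_le {v w u : ℝ → ℝ} (hv : ∀ x, HasDerivAt v (w x) x)
    (hv0 : ∀ x, 0 ≤ v x) (hw : ∀ x, |w x| ≤ 2 * √(v x) * u x) (hvi : Integrable v)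
    (hui : Integrable fun x => u x ^ 2) :
    Integrable (fun x => v x ^ 3) ∧
      ∫ x, v x ^ 3 ≤ 4 / π ^ 2 * (∫ x, v x) ^ 2 * ∫ x, u x ^ 2 := by
  have hvc : Continuous v := continuous_iff_continuousAt.2 fun x => (hv x).continuousAt
  have hwi : Integrable w := by
    have hwm : AEStronglyMeasurable w := by
      rw [show w = deriv v from funext fun x => (hv x).deriv.symm]
      exact (measurable_deriv v).aestronglyMeasurable
    refine (hvi.fun_add hui).mono' hwm (ae_of_all _ fun x => ?_)
    rw [norm_eq_abs]
    nlinarith [hw x, sq_nonneg (√(v x) - u x), sq_sqrt (hv0 x)]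
  have hbot := tendsto_zero_of_hasDerivAt_of_integrableOn_Iic (a := 0) (fun x _ => hv x)
    hwi.integrableOn hvi.integrableOn
  have htop := tendsto_zero_of_hasDerivAt_of_integrableOn_Ioi (a := 0) (fun x _ => hv x)
    hwi.integrableOn hvi.integrableOn
  obtain ⟨z, hz⟩ := hvc.exists_forall_ge_of_tendsto_cocompact_zero
    (by rw [cocompact_eq_atBot_atTop]; exact hbot.sup htop) (hv0 0)
  have hcube_le : ∀ x, v x ^ 3 ≤ v z ^ 2 * v x := fun x => by
    nlinarith [mul_nonneg (mul_nonneg (hv0 x) (sub_nonneg.2 (hz x))) (add_nonneg (hv0 x) (hv0 z))]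
  have hv3 : Integrable fun x => v x ^ 3 :=
    (hvi.const_mul (v z ^ 2)).mono' (hvc.pow 3).aestronglyMeasurable
      (ae_of_all _ fun x => (norm_of_nonneg (pow_nonneg (hv0 x) 3)).trans_le (hcube_le x))
  have hgap : Integrable fun x => v z ^ 2 * v x - v x ^ 3 := (hvi.const_mul _).sub hv3
  refine ⟨hv3, ?_⟩
  set A := ∫ x, v x
  set D := ∫ x, u x ^ 2
  have hrhs : ∀ l, ∫ x, (l ^ 2 * u x ^ 2 + (v z ^ 2 * v x - v x ^ 3)) =
      l ^ 2 * D + (v z ^ 2 * A - ∫ x, v x ^ 3) := fun l => by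
    rw [integral_add (hui.const_mul _) hgap,
      integral_sub (hvi.const_mul _) hv3, integral_const_mul, integral_const_mul]
  have hbound : ∀ l, 0 ≤ l → l * (π * v z ^ 2 / 2) ≤ l ^ 2 * D + (v z ^ 2 * A - ∫ x, v x ^ 3) :=
    fun l hl => calc
      l * (π * v z ^ 2 / 2) ≤ l * ∫ x, √(v z ^ 2 - v x ^ 2) * |w x| := mul_le_mul_of_nonneg_left
          (pi_mul_sq_div_two_le_integral_sqrt_sq_sub_sq_mul_abs hv hwi hbot htop (hv0 z)) hl
      _ = ∫ x, l * (√(v z ^ 2 - v x ^ 2) * |w x|) := (integral_const_mul _ _).symm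
      _ ≤ ∫ x, (l ^ 2 * u x ^ 2 + (v z ^ 2 * v x - v x ^ 3)) :=
          integral_mono_of_nonneg (ae_of_all _ fun x => by positivity)
            ((hui.const_mul _).add hgap)
            (ae_of_all _ fun x => mul_sqrt_sq_sub_sq_mul_abs_le (hv0 x) (hz x) (hw x) hl)
      _ = _ := hrhs l
  have hA : 0 ≤ A := integral_nonneg hv0
  have := hbound (2 * A / π) (by positivity)
  have hcancel : 2 * A / π * (π * v z ^ 2 / 2) = v z ^ 2 * A := by field_simp
  have hsq : (2 * A / π) ^ 2 * D = 4 / π ^ 2 * A ^ 2 * D := by ring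
  linarith

theorem integral_norm_pow_six_le {F : Type*} [NormedAddCommGroup F] [InnerProductSpace ℝ F]
    {f f' : ℝ → F} (hf : ∀ x, HasDerivAt f (f' x) x) (hfi : Integrable fun x => ‖f x‖ ^ 2)
    (hf'i : Integrable fun x => ‖f' x‖ ^ 2) :
    Integrable (fun x => ‖f x‖ ^ 6) ∧
      ∫ x, ‖f x‖ ^ 6 ≤ 4 / π ^ 2 * (∫ x, ‖f x‖ ^ 2) ^ 2 * ∫ x, ‖f' x‖ ^ 2 := by
  have hw : ∀ x, |2 * inner ℝ (f x) (f' x)| ≤ 2 * √(‖f x‖ ^ 2) * ‖f' x‖ := fun x => by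
    rw [abs_mul, abs_two, sqrt_sq (norm_nonneg _), mul_assoc]
    exact mul_le_mul_of_nonneg_left (abs_real_inner_le_norm _ _) zero_le_two
  simpa only [← pow_mul] using
    integral_cube_le_of_abs_deriv_le (fun x => (hf x).norm_sq) (fun x => sq_nonneg _) hw hfi hf'i

theorem eLpNorm_pow_eq_ofReal_integral_norm_pow {α E : Type*} [MeasurableSpace α]
    {μ : Measure α} [NormedAddCommGroup E] {f : α → E} {n : ℕ} (hn : n ≠ 0)
    (hf : Integrable (fun x => ‖f x‖ ^ n) μ) :
    eLpNorm f n μ ^ n = ENNReal.ofReal (∫ x, ‖f x‖ ^ n ∂μ) := by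
  have h := eLpNorm_nnreal_pow_eq_lintegral (μ := μ) (f := f) (p := n) (by exact_mod_cast hn)
  simp only [NNReal.coe_natCast, ENNReal.rpow_natCast, ENNReal.coe_natCast] at h
  rw [h, ofReal_integral_eq_lintegral_ofReal hf (ae_of_all _ fun x => by positivity)]
  simp only [ENNReal.ofReal_pow (norm_nonneg _), ofReal_norm]

theorem sharp_gagliardo_nirenberg (f f' : ℝ → ℂ)
    (hderiv : ∀ x, HasDerivAt f (f' x) x)
    (hf : MemLp f 2 (volume : Measure ℝ))
    (hf' : MemLp f' 2 (volume : Measure ℝ)) :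
    eLpNorm f 6 volume ^ (6 : ℕ) ≤
      ENNReal.ofReal (4 / Real.pi ^ 2) *
        eLpNorm f 2 volume ^ (4 : ℕ) * eLpNorm f' 2 volume ^ (2 : ℕ) := by
  have hfi := hf.integrable_norm_pow two_ne_zero
  have hf'i := hf'.integrable_norm_pow two_ne_zero
  obtain ⟨hf6, hineq⟩ := integral_norm_pow_six_le hderiv hfi hf'i
  have hL6 : eLpNorm f 6 volume ^ 6 = ENNReal.ofReal (∫ x, ‖f x‖ ^ 6) :=
    eLpNorm_pow_eq_ofReal_integral_norm_pow (by norm_num) hf6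
  have hL2 : eLpNorm f 2 volume ^ 2 = ENNReal.ofReal (∫ x, ‖f x‖ ^ 2) :=
    eLpNorm_pow_eq_ofReal_integral_norm_pow two_ne_zero hfi
  have hL2' : eLpNorm f' 2 volume ^ 2 = ENNReal.ofReal (∫ x, ‖f' x‖ ^ 2) :=
    eLpNorm_pow_eq_ofReal_integral_norm_pow two_ne_zero hf'i
  rw [hL6, show (4 : ℕ) = 2 * 2 from rfl, pow_mul, hL2, hL2',
    ← ENNReal.ofReal_pow (integral_nonneg fun x => by positivity),
    ← ENNReal.ofReal_mul (by positivity), ← ENNReal.ofReal_mul (by positivity)]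
  exact ENNReal.ofReal_le_ofReal hineq
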